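/- arXiv:1307.7675 — 3 statements merged into one kernel-verified Lean document; each statement's English description precedes it below -/
import Mathlib

section
/- The congruence (j'-j)(j'+j-i) ≡ 0 (mod n) in integers j, j' has only the trivial solutions j' ≡ j (mod n) and j' ≡ i-j (mod n) if and only if either (1) i is even and n is prime or twice an odd prime, or (2) i is odd and n is prime or a power of 2. -/
private lemma reduce_aux (n : ℕ) (i : ℤ)
    (H : ∀ j j' : ℤ, (n : ℤ) ∣ (j' - j) * (j' + j - i) →
      (n : ℤ) ∣ (j' - j) ∨ (n : ℤ) ∣ (j' + j - i)) (a b : ℤ)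
    (hpar : Even (a + b + i)) (hab : (n : ℤ) ∣ a * b) :
    (n : ℤ) ∣ a ∨ (n : ℤ) ∣ b := by
  obtain ⟨k, hk⟩ := hpar
  have e1 : k - (k - a) = a := by ring
  have e2 : k + (k - a) - i = b := by linarith
  rcases H (k - a) k (by rw [e1, e2]; exact hab) with h | h
  · left; rwa [e1] at h
  · right; rwa [e2] at h

private lemma not_dvd_cast {n m : ℕ} (h0 : 0 < m) (h : m < n) : ¬ (n : ℤ) ∣ (m : ℤ) := by
  intro hd
  rw [Int.natCast_dvd_natCast] at hd
  exact absurd (Nat.le_of_dvd h0 hd) (not_le.mpr h)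

private lemma pow2_case (t : ℕ) (a b : ℤ) (hab : Odd (a + b))
    (h : (2 : ℤ) ^ t ∣ a * b) : (2 : ℤ) ^ t ∣ a ∨ (2 : ℤ) ^ t ∣ b := by
  rcases Int.even_or_odd a with ha | ha
  · have hb : Odd b := by
      rw [Int.even_iff] at ha; rw [Int.odd_iff] at hab ⊢; omega
    have hc : IsCoprime ((2 : ℤ) ^ t) b := by
      apply IsCoprime.pow_left
      rw [Int.prime_two.coprime_iff_not_dvd]
      intro hdvd
      rw [Int.odd_iff] at hb; omega
    exact Or.inl (hc.dvd_of_dvd_mul_right h)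
  · have hc : IsCoprime ((2 : ℤ) ^ t) a := by
      apply IsCoprime.pow_left
      rw [Int.prime_two.coprime_iff_not_dvd]
      intro hdvd
      rw [Int.odd_iff] at ha; omega
    exact Or.inr (hc.dvd_of_dvd_mul_left h)

private lemma twop_case (p : ℕ) (hp : p.Prime) (hpo : Odd p) (a b : ℤ)
    (hab : Even (a + b)) (h : 2 * (p : ℤ) ∣ a * b) :
    2 * (p : ℤ) ∣ a ∨ 2 * (p : ℤ) ∣ b := by
  have hp' : Prime (p : ℤ) := Nat.prime_iff_prime_int.mp hp
  have h2ab : (2 : ℤ) ∣ a * b := dvd_trans ⟨(p : ℤ), rfl⟩ h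
  have h2a : Even a := by
    by_contra hea
    rw [Int.not_even_iff_odd] at hea
    have hb : Odd b := by
      rw [Int.odd_iff] at hea ⊢; rw [Int.even_iff] at hab; omega
    have hodd : Odd (a * b) := hea.mul hb
    rw [Int.odd_iff] at hodd; omega
  have h2b : Even b := by
    rw [Int.even_iff] at h2a ⊢; rw [Int.even_iff] at hab; omega
  obtain ⟨r, hr⟩ := h2a
  obtain ⟨s, hs⟩ := h2b
  obtain ⟨c, hc⟩ := h
  rw [hr, hs] at hc
  have key : 2 * (r * s) = (p : ℤ) * c := by
    have h4 : (2 : ℤ) * (2 * (r * s)) = 2 * ((p : ℤ) * c) := by linear_combination hc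
    exact mul_left_cancel₀ two_ne_zero h4
  have hpd : (p : ℤ) ∣ 2 * (r * s) := ⟨c, key⟩
  rcases hp'.dvd_mul.mp hpd with h1 | h1
  · exfalso
    have hle : (p : ℤ) ≤ 2 := Int.le_of_dvd (by norm_num) h1
    have hple : p ≤ 2 := by exact_mod_cast hle
    have h2 := hp.two_le
    rw [Nat.odd_iff] at hpo
    omega
  · rcases hp'.dvd_mul.mp h1 with h2 | h2
    · obtain ⟨d, rfl⟩ := h2
      exact Or.inl ⟨d, by rw [hr]; ring⟩
    · obtain ⟨d, rfl⟩ := h2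
      exact Or.inr ⟨d, by rw [hs]; ring⟩

/-- The congruence `(j'-j)(j'+j-i) ≡ 0 (mod n)` has only the trivial solutions
`j' ≡ j (mod n)` and `j' ≡ i - j (mod n)` iff either `i` is even and `n` is prime or
twice an odd prime, or `i` is odd and `n` is prime or a power of `2`. -/
theorem stmt0 (n : ℕ) (hn : 2 ≤ n) (i : ℤ) :
    (∀ j j' : ℤ, (n : ℤ) ∣ (j' - j) * (j' + j - i) →
      (n : ℤ) ∣ (j' - j) ∨ (n : ℤ) ∣ (j' + j - i)) ↔
    ((Even i ∧ (Nat.Prime n ∨ ∃ p : ℕ, Nat.Prime p ∧ Odd p ∧ n = 2 * p)) ∨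
     (Odd i ∧ (Nat.Prime n ∨ ∃ t : ℕ, n = 2 ^ t))) := by
  constructor
  · -- forward direction
    intro H
    by_contra hC
    rw [not_or] at hC
    obtain ⟨hC1, hC2⟩ := hC
    have hn0 : n ≠ 0 := by omega
    rcases Int.even_or_odd i with hi | hi
    · -- i even
      have hX : ¬(Nat.Prime n ∨ ∃ p : ℕ, Nat.Prime p ∧ Odd p ∧ n = 2 * p) :=
        fun h => hC1 ⟨hi, h⟩
      rw [not_or] at hX
      obtain ⟨hnp, hnf⟩ := hX
      push_neg at hnf
      rcases Nat.even_or_odd n with hne | hno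
      · -- n even
        have hn2 : n ≠ 2 := fun h => hnp (h ▸ Nat.prime_two)
        by_cases h4 : 4 ∣ n
        · -- counterexample a = n/2, b = 2
          obtain ⟨k, hk⟩ := h4
          have hh := reduce_aux n i H ((2 * k : ℕ) : ℤ) ((2 : ℕ) : ℤ)
            (by rw [Int.even_iff] at hi ⊢; push_cast; omega)
            (by rw [← Int.natCast_mul]
                exact Int.natCast_dvd_natCast.mpr ⟨1, by omega⟩)
          rcases hh with h | h
          · exact not_dvd_cast (by omega) (by omega) h
          · exact not_dvd_cast (by omega) (by omega) h
        · -- n = 2q with q odd composite; counterexample a = 2m, b = 2v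
          obtain ⟨q, hq⟩ := hne
          have hqodd : q % 2 = 1 := by omega
          have hq2 : 2 ≤ q := by omega
          have hqnp : ¬ q.Prime := fun hqp =>
            hnf q hqp (Nat.odd_iff.mpr hqodd) (by omega)
          obtain ⟨m, hmdvd, hm2, hmlt⟩ := Nat.exists_dvd_of_not_prime2 hq2 hqnp
          obtain ⟨v, hv⟩ := hmdvd
          have hv2 : 2 ≤ v := by nlinarith
          have hvlt : v < q := by nlinarith
          have hnat : (2 * m) * (2 * v) = n * 2 := by
            rw [hq, hv]; ring
          have hh := reduce_aux n i H ((2 * m : ℕ) : ℤ) ((2 * v : ℕ) : ℤ)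
            (by rw [Int.even_iff] at hi ⊢; push_cast; omega)
            (by rw [← Int.natCast_mul]
                exact Int.natCast_dvd_natCast.mpr ⟨2, hnat⟩)
          rcases hh with h | h
          · exact not_dvd_cast (by omega) (by omega) h
          · exact not_dvd_cast (by omega) (by omega) h
      · -- n odd composite; counterexample a = m, b = v
        obtain ⟨m, hmdvd, hm2, hmlt⟩ := Nat.exists_dvd_of_not_prime2 hn hnp
        obtain ⟨v, hv⟩ := hmdvd
        have hnodd : n % 2 = 1 := Nat.odd_iff.mp hno
        have hv2 : 2 ≤ v := by nlinarith
        have hvlt : v < n := by nlinarith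
        have hmodd : m % 2 = 1 := by
          rcases Nat.even_or_odd m with h | h
          · exfalso; obtain ⟨k, hk⟩ := h
            have : 2 ∣ n := by rw [hv]; exact Dvd.dvd.mul_right ⟨k, by omega⟩ v
            omega
          · exact Nat.odd_iff.mp h
        have hvodd : v % 2 = 1 := by
          rcases Nat.even_or_odd v with h | h
          · exfalso; obtain ⟨k, hk⟩ := h
            have : 2 ∣ n := by rw [hv]; exact Dvd.dvd.mul_left ⟨k, by omega⟩ m
            omega
          · exact Nat.odd_iff.mp h
        have hh := reduce_aux n i H ((m : ℕ) : ℤ) ((v : ℕ) : ℤ)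
          (by rw [Int.even_iff] at hi ⊢; omega)
          (by rw [← Int.natCast_mul]
              exact Int.natCast_dvd_natCast.mpr ⟨1, by rw [hv]; ring⟩)
        rcases hh with h | h
        · exact not_dvd_cast (by omega) (by omega) h
        · exact not_dvd_cast (by omega) (by omega) h
    · -- i odd
      have hX : ¬(Nat.Prime n ∨ ∃ t : ℕ, n = 2 ^ t) := fun h => hC2 ⟨hi, h⟩
      rw [not_or] at hX
      obtain ⟨hnp, hnf⟩ := hX
      push_neg at hnf
      rcases Nat.even_or_odd n with hne | hno
      · -- n even, not a power of 2 : a = odd part, b = 2-part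
        have hmul : 2 ^ (n.factorization 2) * (n / 2 ^ (n.factorization 2)) = n :=
          Nat.ordProj_mul_ordCompl_eq_self n 2
        set s := n.factorization 2 with hs
        set q := n / 2 ^ s with hqdef
        clear_value q s
        have hqodd : ¬ 2 ∣ q := by
          rw [hqdef, hs]; exact Nat.not_dvd_ordCompl Nat.prime_two hn0
        have hq1 : q ≠ 1 := by
          intro h1
          rw [h1, mul_one] at hmul
          exact hnf s hmul.symm
        have hq3 : 3 ≤ q := by omega
        have hs1 : 1 ≤ s := by
          by_contra h
          have hs0 : s = 0 := by omega
          rw [hs0, pow_zero, one_mul] at hmul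
          obtain ⟨k, hk⟩ := hne
          exact hqodd (by omega)
        have hp2 : 2 ≤ 2 ^ s := by
          calc 2 = 2 ^ 1 := by norm_num
          _ ≤ 2 ^ s := Nat.pow_le_pow_right (by norm_num) hs1
        have hqlt : q < n := by nlinarith
        have hplt : 2 ^ s < n := by nlinarith
        have hpe : 2 ^ s % 2 = 0 := by
          have hd2 : (2 : ℕ) ∣ 2 ^ s := dvd_pow_self 2 (by omega)
          omega
        have hh := reduce_aux n i H ((q : ℕ) : ℤ) ((2 ^ s : ℕ) : ℤ)
          (by rw [Int.even_iff]; rw [Int.odd_iff] at hi; omega)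
          (by rw [← Int.natCast_mul]
              exact Int.natCast_dvd_natCast.mpr ⟨1, by rw [mul_one, mul_comm]; exact hmul⟩)
        rcases hh with h | h
        · exact not_dvd_cast (by omega) hqlt h
        · exact not_dvd_cast (by omega) hplt h
      · -- n odd composite : a = m, b = 2v
        obtain ⟨m, hmdvd, hm2, hmlt⟩ := Nat.exists_dvd_of_not_prime2 hn hnp
        obtain ⟨v, hv⟩ := hmdvd
        have hnodd : n % 2 = 1 := Nat.odd_iff.mp hno
        have hv2 : 2 ≤ v := by nlinarith
        have hvlt : v < n := by nlinarith
        have hmodd : m % 2 = 1 := by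
          rcases Nat.even_or_odd m with h | h
          · exfalso; obtain ⟨k, hk⟩ := h
            have : 2 ∣ n := by rw [hv]; exact Dvd.dvd.mul_right ⟨k, by omega⟩ v
            omega
          · exact Nat.odd_iff.mp h
        have hnat : m * (2 * v) = n * 2 := by rw [hv]; ring
        have hh := reduce_aux n i H ((m : ℕ) : ℤ) ((2 * v : ℕ) : ℤ)
          (by rw [Int.even_iff]; rw [Int.odd_iff] at hi; push_cast; omega)
          (by rw [← Int.natCast_mul]
              exact Int.natCast_dvd_natCast.mpr ⟨2, hnat⟩)
        rcases hh with h | h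
        · exact not_dvd_cast (by omega) (by omega) h
        · -- n ∣ 2v impossible since n odd
          rw [Int.natCast_dvd_natCast] at h
          have hcop : Nat.Coprime n 2 :=
            ((Nat.prime_two.coprime_iff_not_dvd).mpr (by omega)).symm
          have hdv := hcop.dvd_of_dvd_mul_left h
          exact absurd (Nat.le_of_dvd (by omega) hdv) (by omega)
  · -- backward direction
    rintro (⟨hi, hcase⟩ | ⟨hi, hcase⟩) j j' hd
    · rcases hcase with hp | ⟨p, hp, hpo, rfl⟩
      · exact (Nat.prime_iff_prime_int.mp hp).dvd_mul.mp hd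
      · have hd' : 2 * (p : ℤ) ∣ (j' - j) * (j' + j - i) := by
          rwa [show ((2 * p : ℕ) : ℤ) = 2 * (p : ℤ) by push_cast; ring] at hd
        have hpar : Even ((j' - j) + (j' + j - i)) := by
          rw [Int.even_iff]; rw [Int.even_iff] at hi; omega
        have := twop_case p hp hpo (j' - j) (j' + j - i) hpar hd'
        rwa [show ((2 * p : ℕ) : ℤ) = 2 * (p : ℤ) by push_cast; ring]
    · rcases hcase with hp | ⟨t, rfl⟩
      · exact (Nat.prime_iff_prime_int.mp hp).dvd_mul.mp hd
      · have hd' : (2 : ℤ) ^ t ∣ (j' - j) * (j' + j - i) := by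
          rwa [show ((2 ^ t : ℕ) : ℤ) = (2 : ℤ) ^ t by push_cast; ring] at hd
        have hpar : Odd ((j' - j) + (j' + j - i)) := by
          rw [Int.odd_iff]; rw [Int.odd_iff] at hi; omega
        have := pow2_case t (j' - j) (j' + j - i) hpar hd'
        rwa [show ((2 ^ t : ℕ) : ℤ) = (2 : ℤ) ^ t by push_cast; ring]
end

section
/- (Jacobi triple product specialization) As formal power series in q, ∑_{k∈ℤ} (-1)^k q^{k(3k-1)/2} = ∏_{j=1}^∞ (1-q^j); equivalently f(-q,-q^2) = φ(q) where φ(q) = ∏_{j≥1}(1-q^j). -/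
open PowerSeries Finset

/-- The pentagonal-number series `∑_{k∈ℤ} (-1)^k q^{k(3k-1)/2} = f(-q,-q²)`.
For the coefficient of `q^m` only the finitely many `k` with `|k| ≤ m+1` can
contribute, so the sum is written over that range. -/
noncomputable def pentagonalSeries : PowerSeries ℤ :=
  PowerSeries.mk fun m =>
    ∑ k ∈ Finset.Icc (-(m : ℤ) - 1) ((m : ℤ) + 1),
      if k * (3 * k - 1) / 2 = (m : ℤ) then (-1 : ℤ) ^ k.natAbs else 0

/-!
Mathlib proves the pentagonal number theorem `∏ (1 - X ^ (n + 1)) = PowerSeries.pentagonalSeries`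
in the `X`-adic topology. Since a factor `1 - X ^ j` with `j > m` does not change the
coefficient of `X ^ m`, the product over `1 ≤ j ≤ m + 1` already has the right coefficient;
and since `|k| ≤ k (3k - 1) / 2`, every `k` whose pentagonal number is `m` lies in the range
`|k| ≤ m + 1` summed over in `pentagonalSeries`.
-/

namespace PowerSeries

variable {R : Type*} [CommRing R]

theorem coeff_mul_one_sub_X_pow_of_lt {n k : ℕ} (h : n < k) (f : R⟦X⟧) :
    coeff n (f * (1 - X ^ k)) = coeff n f := by
  rw [mul_sub, mul_one, map_sub, coeff_mul_X_pow', if_neg (by omega), sub_zero]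

theorem coeff_mul_prod_one_sub_X_pow_succ_of_le {n : ℕ} {s : Finset ℕ} (hs : ∀ k ∈ s, n ≤ k)
    (f : R⟦X⟧) : coeff n (f * ∏ k ∈ s, (1 - X ^ (k + 1))) = coeff n f := by
  classical
  induction s using Finset.induction_on with
  | empty => rw [prod_empty, mul_one]
  | insert a s ha ih =>
    rw [prod_insert ha, mul_left_comm, mul_comm,
      coeff_mul_one_sub_X_pow_of_lt (Nat.lt_add_one_of_le (hs a (mem_insert_self a s))),
      ih fun k hk => hs k (mem_insert_of_mem hk)]

theorem coeff_prod_range_one_sub_X_pow_succ (n : ℕ) :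
    coeff n (∏ k ∈ range (n + 1), (1 - X ^ (k + 1) : R⟦X⟧)) = coeff n (pentagonalSeries R) := by
  classical
  obtain ⟨s, hs, hsub⟩ := ((coeff_prod_one_sub_X_pow_eventually_eq R n).and
    (Filter.eventually_ge_atTop (range (n + 1)))).exists
  rw [← hs, ← prod_sdiff hsub, mul_comm, coeff_mul_prod_one_sub_X_pow_succ_of_le]
  intro k hk
  have hk' := mem_range.not.1 (mem_sdiff.1 hk).2
  omega

end PowerSeries

theorem abs_le_natCast_pentagonal (k : ℤ) : |k| ≤ pentagonal k := by
  have h := two_mul_natCast_pentagonal k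
  rcases abs_cases k with ⟨hk, -⟩ | ⟨hk, -⟩ <;> nlinarith

theorem pentagonalSeries_eq_powerSeries_pentagonalSeries :
    _root_.pentagonalSeries = PowerSeries.pentagonalSeries ℤ := by
  ext m
  have hcond (k : ℤ) : k * (3 * k - 1) / 2 = (m : ℤ) ↔ pentagonal k = m := by
    rw [← natCast_pentagonal, Nat.cast_inj]
  simp only [_root_.pentagonalSeries, coeff_mk, hcond]
  by_cases hm : m ∈ Set.range pentagonal
  · obtain ⟨k, rfl⟩ := hm
    simp only [pentagonal_inj, sum_ite_eq', coeff_pentagonalSeries_pentagonal]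
    have habs := abs_le_natCast_pentagonal k
    rw [if_pos (mem_Icc.2 ⟨by linarith [neg_abs_le k], by linarith [le_abs_self k]⟩), Int.cast_id,
      ← Int.negOnePow_abs, Int.abs_eq_natAbs, Int.coe_negOnePow_natCast]
  · rw [coeff_pentagonalSeries_eq_zero ℤ hm]
    exact sum_eq_zero fun k _ => if_neg fun hk => hm ⟨k, hk⟩

/-- Euler's pentagonal number theorem:
`∑_{k∈ℤ} (-1)^k q^{k(3k-1)/2} = ∏_{j=1}^∞ (1-q^j)`, i.e. `f(-q,-q²) = φ(q)`,
stated coefficientwise (factors with `j > m` do not affect the coefficient of `q^m`). -/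
theorem stmt8 (m : ℕ) :
    PowerSeries.coeff m pentagonalSeries =
      PowerSeries.coeff m (∏ j ∈ Finset.Icc 1 (m + 1), (1 - (PowerSeries.X : PowerSeries ℤ) ^ j)) := by
  rw [pentagonalSeries_eq_powerSeries_pentagonalSeries, ← coeff_prod_range_one_sub_X_pow_succ,
    range_eq_Ico, prod_Ico_add' (fun j => 1 - X ^ j), zero_add, Ico_add_one_right_eq_Icc]
end

section
/- For n = 3 and a partition λ = (λ_1^{f_1}, ..., λ_l^{f_l}) (λ_1 > ... > λ_l > 0, multiplicities f_k) satisfying f_1 - λ_1 + 1 ≡ 0 (mod 3) and f_k + f_{k+1} + λ_k - λ_{k+1} ≡ 0 (mod 3) for all 1 ≤ k < l, the total size |λ| = ∑ f_k λ_k is congruent to 0 or 2 modulo 3; in particular |λ| ≢ 1 (mod 3). -/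
open Finset

private lemma key12 (lam f : ℕ → ℕ)
    (h1 : ((f 1 : ℤ) - lam 1 + 1) ≡ 0 [ZMOD 3]) :
    ∀ l, 1 ≤ l →
    (∀ k, 1 ≤ k → k < l →
      ((f k : ℤ) + f (k + 1) + lam k - lam (k + 1)) ≡ 0 [ZMOD 3]) →
    ((∑ k ∈ Finset.Icc 1 l, f k * lam k : ℕ) : ZMod 3)
      = ((f l : ZMod 3) + lam l) ^ 2 - 1 := by
  have h3 : (3 : ZMod 3) = 0 := by decide
  have hcast : ∀ a : ℤ, a ≡ 0 [ZMOD 3] → ((a : ZMod 3) = 0) := by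
    intro a ha
    have := (ZMod.intCast_eq_intCast_iff a 0 3).mpr ha
    simpa using this
  intro l
  induction l with
  | zero => intro h; omega
  | succ n ih =>
    intro _ hrec
    rcases Nat.eq_or_lt_of_le (Nat.one_le_iff_ne_zero.mpr (Nat.succ_ne_zero n)) with h | h
    · -- n + 1 = 1
      have hn : n = 0 := by omega
      subst hn
      simp only [Finset.Icc_self, Finset.sum_singleton]
      have := hcast _ h1
      push_cast at this ⊢
      have hf1 : (f 1 : ZMod 3) = (lam 1 : ZMod 3) - 1 := by linear_combination this
      rw [hf1]
      linear_combination ((lam 1 : ZMod 3) - (lam 1) ^ 2) * h3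
    · have hn : 1 ≤ n := by omega
      rw [Finset.sum_Icc_succ_top (by omega : 1 ≤ n + 1)]
      have ihn := ih hn (fun k hk hkn => hrec k hk (by omega))
      have hr := hcast _ (hrec n hn (by omega))
      push_cast at hr
      rw [Nat.cast_add, Nat.cast_mul, ihn]
      push_cast
      have hfn : (f (n+1) : ZMod 3) = (lam (n+1) : ZMod 3) - (f n + lam n) := by
        linear_combination hr
      rw [hfn]
      linear_combination ((lam (n+1) : ZMod 3) * (f n + lam n) - (lam (n+1) : ZMod 3) ^ 2) * h3

/-- For `n = 3`: if a partition `(λ₁^{f₁}, …, λ_l^{f_l})` (with `λ₁ > ⋯ > λ_l > 0`,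
multiplicities `f_k ≥ 1`) satisfies `f₁ - λ₁ + 1 ≡ 0 (mod 3)` and
`f_k + f_{k+1} + λ_k - λ_{k+1} ≡ 0 (mod 3)` for `1 ≤ k < l`, then the total size
`∑ f_k λ_k` is congruent to `0` or `2` mod `3`; in particular it is not `≡ 1 (mod 3)`. -/
theorem stmt12 (l : ℕ) (hl : 1 ≤ l) (lam f : ℕ → ℕ)
    (hfpos : ∀ k ∈ Finset.Icc 1 l, 0 < f k)
    (hlampos : ∀ k ∈ Finset.Icc 1 l, 0 < lam k)
    (hdec : ∀ k, 1 ≤ k → k < l → lam (k + 1) < lam k)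
    (h1 : ((f 1 : ℤ) - lam 1 + 1) ≡ 0 [ZMOD 3])
    (h2 : ∀ k, 1 ≤ k → k < l →
      ((f k : ℤ) + f (k + 1) + lam k - lam (k + 1)) ≡ 0 [ZMOD 3]) :
    ((∑ k ∈ Finset.Icc 1 l, f k * lam k) % 3 = 0 ∨
      (∑ k ∈ Finset.Icc 1 l, f k * lam k) % 3 = 2) ∧
    (∑ k ∈ Finset.Icc 1 l, f k * lam k) % 3 ≠ 1 := by
  have key := key12 lam f h1 l hl h2
  set S := ∑ k ∈ Finset.Icc 1 l, f k * lam k with hS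
  have hmod : ((S : ZMod 3) : ZMod 3) ≠ 1 := by
    rw [key]
    have : ∀ b : ZMod 3, b ^ 2 - 1 ≠ 1 := by decide
    exact this _
  have hne : S % 3 ≠ 1 := by
    intro hone
    apply hmod
    have : ((S % 3 : ℕ) : ZMod 3) = (S : ZMod 3) := by
      simpa using (ZMod.natCast_self_eq_zero (n := 3)) ▸ (Nat.cast_mod_cast S 3)
    rw [← this, hone]
    decide
  refine ⟨?_, hne⟩
  omega
end
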